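/- arXiv:1302.4091 — 6 statements merged into one kernel-verified Lean document; each statement's English description precedes it below -/
import Mathlib

section
/- Let G be a Lie group (or a locally compact group with left Haar measure ν and a left-invariant metric d), D a countable dense subset of G, and 𝔹 the collection of closed balls with center in D and positive rational radius. Let U be a nonempty open subset of G and μ a Borel probability measure on U. If μ(g·B) = μ(B) for every B ∈ 𝔹 and g ∈ D such that both B and g·B are contained in U, then ν(U) < ∞ and μ equals the normalized restriction of the Haar measure: μ = ν|_U / ν(U). -/
/-!
Left translations by elements of `D` move rational balls inside `U` without changing their
`μ`-mass. By density of `D` and continuity of `μ` from above on closed balls, `μ (closedBall x a)`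
therefore depends only on `a`, as long as the ball stays well inside `U`. Counting the pairs
`(x, y)` with `dist x y ≤ a` once against `μ ⊗ ν` and once against `ν ⊗ μ`, and using the left
invariance of `ν`, gives `μ O * ν U ≤ ν O` for every open `O ⊆ U`. Applied near each point this
forces `ν U < ∞`; the normalized restriction of `ν` to `U` then dominates `μ` on open sets, hence
everywhere by outer regularity, and two probability measures one of which dominates the other
coincide.
-/

open MeasureTheory Metric Filter Topology Set
open scoped ENNReal

namespace InvariantOnBalls

section BallInterior

variable {X : Type*} [PseudoMetricSpace X]

def ballInterior (U : Set X) (r : ℝ) : Set X := {x | ball x r ⊆ U}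

variable {U : Set X} {r s : ℝ} {x : X}

@[simp]
lemma mem_ballInterior : x ∈ ballInterior U r ↔ ball x r ⊆ U := Iff.rfl

lemma isClosed_ballInterior (U : Set X) (r : ℝ) : IsClosed (ballInterior U r) := by
  have : ballInterior U r = (thickening r Uᶜ)ᶜ := by
    ext x
    simp only [mem_ballInterior, subset_def, mem_ball, mem_compl_iff, mem_thickening_iff,
      not_exists, not_and, not_lt]
    exact forall_congr' fun y => by rw [dist_comm, ← not_lt]; tauto
  rw [this]
  exact isOpen_thickening.isClosed_compl

lemma ballInterior_anti (h : r ≤ s) : ballInterior U s ⊆ ballInterior U r :=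
  fun _ hx => (ball_subset_ball h).trans hx

lemma ballInterior_subset (hr : 0 < r) : ballInterior U r ⊆ U :=
  fun _ hx => hx (mem_ball_self hr)

lemma closedBall_subset_ballInterior (hx : x ∈ ballInterior U (s + r)) :
    closedBall x r ⊆ ballInterior U s := fun _ hz =>
  (ball_subset_ball' (by linarith [mem_closedBall.mp hz])).trans hx

lemma measure_eq_iSup_ballInterior [MeasurableSpace X] (μ : Measure X) (hU : IsOpen U) :
    μ U = ⨆ n : ℕ, μ (ballInterior U (1 / (n + 1))) := by
  have hmono : Monotone fun n : ℕ => ballInterior U (1 / (n + 1)) := fun m n hmn =>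
    ballInterior_anti (Nat.one_div_le_one_div hmn)
  rw [← hmono.measure_iUnion]
  congr 1
  refine (Subset.antisymm ?_ (iUnion_subset fun n => ballInterior_subset Nat.one_div_pos_of_nat))
  intro x hx
  obtain ⟨ε, hε, hball⟩ := Metric.isOpen_iff.mp hU x hx
  obtain ⟨n, hn⟩ := exists_nat_one_div_lt hε
  exact mem_iUnion.mpr ⟨n, (ball_subset_ball hn.le).trans hball⟩

end BallInterior

lemma lintegral_measure_closedBall_comm {X : Type*} [PseudoMetricSpace X] [MeasurableSpace X]
    [OpensMeasurableSpace X] [SecondCountableTopology X] (μ ν : Measure X) [SFinite μ] [SFinite ν]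
    (r : ℝ) : ∫⁻ y, μ (closedBall y r) ∂ν = ∫⁻ x, ν (closedBall x r) ∂μ := by
  have hE : MeasurableSet {p : X × X | dist p.1 p.2 ≤ r} :=
    measurableSet_le measurable_dist measurable_const
  calc ∫⁻ y, μ (closedBall y r) ∂ν = μ.prod ν {p : X × X | dist p.1 p.2 ≤ r} :=
        (Measure.prod_apply_symm hE).symm
    _ = ∫⁻ x, ν (closedBall x r) ∂μ := by
        rw [Measure.prod_apply hE]
        simp_rw [closedBall, dist_comm]
        rfl

lemma measure_ne_top_of_forall_isOpen_mul_le {X : Type*} [TopologicalSpace X]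
    [SecondCountableTopology X] [MeasurableSpace X] {μ ν : Measure X} [IsLocallyFiniteMeasure ν]
    {U : Set X} (hU : IsOpen U) (hμU : μ U ≠ 0)
    (h : ∀ O, IsOpen O → O ⊆ U → μ O * ν U ≤ ν O) : ν U ≠ ∞ := by
  intro htop
  refine hμU (measure_null_of_locally_null U fun x _ => ?_)
  obtain ⟨V, hxV, hV, hVfin⟩ := ν.exists_isOpen_measure_lt_top x
  refine ⟨U ∩ V, inter_mem_nhdsWithin U (hV.mem_nhds hxV), ?_⟩
  by_contra h0
  have hle := h (U ∩ V) (hU.inter hV) inter_subset_left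
  rw [htop, ENNReal.mul_top h0, top_le_iff] at hle
  exact ((measure_mono inter_subset_right).trans_lt hVfin).ne hle

lemma eq_smul_restrict_of_forall_isOpen_mul_le {X : Type*} [PseudoMetricSpace X]
    [MeasurableSpace X] [BorelSpace X] {μ ν : Measure X} [IsProbabilityMeasure μ] {U : Set X}
    (hU : IsOpen U) (hμU : μ Uᶜ = 0) (h0 : ν U ≠ 0) (htop : ν U ≠ ∞)
    (h : ∀ O, IsOpen O → O ⊆ U → μ O * ν U ≤ ν O) : μ = (ν U)⁻¹ • ν.restrict U := by
  set ρ := (ν U)⁻¹ • ν.restrict U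
  have : IsProbabilityMeasure ρ := ⟨by simp [ρ, ENNReal.inv_mul_cancel h0 htop]⟩
  refine Measure.eq_of_le_of_measure_univ_eq (Measure.le_iff'.mpr fun A => ?_) (by simp)
  rw [Set.measure_eq_iInf_isOpen A ρ]
  refine le_iInf₂ fun V hAV => le_iInf fun hV => ?_
  calc μ A ≤ μ V := measure_mono hAV
    _ = μ (V ∩ U) := (measure_inter_conull hμU).symm
    _ ≤ ν (V ∩ U) / ν U := (ENNReal.le_div_iff_mul_le (.inl h0) (.inl htop)).mpr
        (h _ (hV.inter hU) inter_subset_right)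
    _ = ρ V := by simp [ρ, Measure.restrict_apply hV.measurableSet, ENNReal.div_eq_inv_mul]

section Group

variable {G : Type*} [Group G] [MetricSpace G] [IsIsometricSMul G G]

lemma image_mul_left_closedBall (g x : G) (r : ℝ) :
    (g * ·) '' closedBall x r = closedBall (g * x) r :=
  (IsometryEquiv.constSMul g).image_closedBall x r

variable [MeasurableSpace G]

def IsInvariantOnRationalBalls (μ : Measure G) (D U : Set G) : Prop :=
  ∀ c ∈ D, ∀ q : ℚ, 0 < q → ∀ g ∈ D, closedBall c (q : ℝ) ⊆ U →
    (g * ·) '' closedBall c (q : ℝ) ⊆ U →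
    μ ((g * ·) '' closedBall c (q : ℝ)) = μ (closedBall c (q : ℝ))

variable {μ ν : Measure G} {D U : Set G} {a b s : ℝ} {x y : G}

lemma measure_closedBall_le_of_lt [ContinuousMul G] (hD : Dense D)
    (hμ : IsInvariantOnRationalBalls μ D U) (ha : 0 ≤ a) (hab : a < b)
    (hx : closedBall x b ⊆ U) (hy : closedBall y b ⊆ U) :
    μ (closedBall x a) ≤ μ (closedBall y b) := by
  obtain ⟨q, haq, hqb⟩ := exists_rat_btwn (show a < (a + b) / 2 by linarith)
  obtain ⟨c, hcx, hcD⟩ := Metric.dense_iff.mp hD x (q - a) (by linarith)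
  obtain ⟨g, hgD, hg⟩ := hD.exists_mem_open (isOpen_ball.preimage (continuous_mul_const c))
    (⟨y * c⁻¹, by simpa using (show 0 < b - q by linarith)⟩ :
      ({g | g * c ∈ ball y (b - q)} : Set G).Nonempty)
  rw [mem_ball] at hcx
  have hgc : dist (g * c) y < b - q := hg
  have hxc : closedBall x a ⊆ closedBall c q :=
    closedBall_subset_closedBall' (by rw [dist_comm]; linarith)
  have hcx' : closedBall c q ⊆ closedBall x b := closedBall_subset_closedBall' (by linarith)
  have hgy : closedBall (g * c) q ⊆ closedBall y b := closedBall_subset_closedBall' (by linarith)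
  have hinv := hμ c hcD q (by exact_mod_cast ha.trans_lt haq) g hgD (hcx'.trans hx)
    (by rw [image_mul_left_closedBall]; exact hgy.trans hy)
  rw [image_mul_left_closedBall] at hinv
  calc μ (closedBall x a) ≤ μ (closedBall c q) := measure_mono hxc
    _ = μ (closedBall (g * c) q) := hinv.symm
    _ ≤ μ (closedBall y b) := measure_mono hgy

lemma measure_closedBall_eq_of_mem_ballInterior [OpensMeasurableSpace G] [ContinuousMul G]
    [IsFiniteMeasure μ]
    (hD : Dense D) (hμ : IsInvariantOnRationalBalls μ D U) (hx : x ∈ ballInterior U s)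
    (hy : y ∈ ballInterior U s) (ha : 0 ≤ a) (has : a < s) :
    μ (closedBall x a) = μ (closedBall y a) := by
  suffices key : ∀ x y, x ∈ ballInterior U s → y ∈ ballInterior U s →
      μ (closedBall x a) ≤ μ (closedBall y a) from
    (key x y hx hy).antisymm (key y x hy hx)
  intro x y hx hy
  have hlim : Tendsto (fun b => μ (closedBall y b)) (𝓝[>] a) (𝓝 (μ (closedBall y a))) := by
    rw [← biInter_gt_closedBall y a]
    exact tendsto_measure_biInter_gt (fun _ _ => measurableSet_closedBall.nullMeasurableSet)
      (fun _ _ _ => closedBall_subset_closedBall) ⟨s, has, measure_ne_top μ _⟩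
  refine ge_of_tendsto hlim (eventually_of_mem (Ioo_mem_nhdsGT has) fun b hb => ?_)
  exact measure_closedBall_le_of_lt hD hμ ha hb.1 ((closedBall_subset_ball hb.2).trans hx)
    ((closedBall_subset_ball hb.2).trans hy)

variable [ν.IsMulLeftInvariant]

lemma measure_closedBall_eq_measure_closedBall_one (x : G) (r : ℝ) :
    ν (closedBall x r) = ν (closedBall 1 r) := by
  rw [← measure_smul ν x (closedBall 1 r), Metric.smul_closedBall, smul_eq_mul, mul_one]

variable [BorelSpace G] [SecondCountableTopology G]

section DoubleCounting

variable [SFinite μ] [SFinite ν] {W : Set G} {m : ℝ≥0∞}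

lemma mul_measure_le_of_measure_closedBall_eq (hW : MeasurableSet W)
    (hm : ∀ y ∈ W, μ (closedBall y a) = m) : m * ν W ≤ ν (closedBall 1 a) * μ univ :=
  calc m * ν W = ∫⁻ y in W, μ (closedBall y a) ∂ν := by
        rw [setLIntegral_congr_fun hW hm, setLIntegral_const]
    _ = ∫⁻ x, ν.restrict W (closedBall x a) ∂μ := lintegral_measure_closedBall_comm μ _ a
    _ ≤ ∫⁻ _, ν (closedBall 1 a) ∂μ := lintegral_mono fun x =>
        (Measure.restrict_apply_le W _).trans_eq (measure_closedBall_eq_measure_closedBall_one x a)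
    _ = ν (closedBall 1 a) * μ univ := lintegral_const _

lemma measure_closedBall_mul_le_of_measure_closedBall_eq (hW : MeasurableSet W) {V : Set G}
    (hV : MeasurableSet V) (hVW : ∀ x ∈ V, closedBall x a ⊆ W)
    (hm : ∀ y ∈ W, μ (closedBall y a) = m) : ν (closedBall 1 a) * μ V ≤ m * ν W :=
  calc ν (closedBall 1 a) * μ V = ∫⁻ x in V, ν.restrict W (closedBall x a) ∂μ := by
        rw [← setLIntegral_const]
        refine setLIntegral_congr_fun hV fun x hx => ?_
        rw [Measure.restrict_apply measurableSet_closedBall, inter_eq_left.mpr (hVW x hx),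
          measure_closedBall_eq_measure_closedBall_one x a]
    _ ≤ ∫⁻ x, ν.restrict W (closedBall x a) ∂μ := setLIntegral_le_lintegral _ _
    _ = ∫⁻ y in W, μ (closedBall y a) ∂ν := (lintegral_measure_closedBall_comm μ _ a).symm
    _ = m * ν W := by rw [setLIntegral_congr_fun hW hm, setLIntegral_const]

end DoubleCounting

variable [ContinuousMul G] [IsProbabilityMeasure μ] [IsLocallyFiniteMeasure ν] [ν.IsOpenPosMeasure]

lemma measure_ballInterior_mul_le (hD : Dense D) (hμ : IsInvariantOnRationalBalls μ D U)
    {O : Set G} (hOU : O ⊆ U) (hs : 0 < s) :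
    μ (ballInterior O s) * ν (ballInterior U s) ≤ ν O := by
  obtain ⟨ε, hε, hνε⟩ := (ν.finiteAt_nhds 1).exists_mem_basis nhds_basis_closedBall
  set a := min (s / 4) ε
  have ha : 0 < a := lt_min (by linarith) hε
  have has : a < s / 2 := (min_le_left _ _).trans_lt (by linarith)
  set n := ν (closedBall (1 : G) a)
  have hn0 : n ≠ 0 := (measure_closedBall_pos ν 1 ha).ne'
  have hntop : n ≠ ∞ :=
    ((measure_mono (closedBall_subset_closedBall (min_le_right _ _))).trans_lt hνε).ne
  rcases (ballInterior O s).eq_empty_or_nonempty with hX | ⟨x₀, hx₀⟩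
  · simp [hX]
  have hOU' : ∀ r, ballInterior O r ⊆ ballInterior U r := fun r x hx => hx.trans hOU
  have hx₀' : x₀ ∈ ballInterior U (s / 2) := hOU' _ (ballInterior_anti (by linarith) hx₀)
  -- `m` is the common mass of the `a`-balls deep in `U`; it cancels between `hA` and `hB`.
  set m := μ (closedBall x₀ a)
  have hm : ∀ y ∈ ballInterior U (s / 2), μ (closedBall y a) = m := fun y hy =>
    measure_closedBall_eq_of_mem_ballInterior hD hμ hy hx₀' ha.le has
  have hA : m * ν (ballInterior U (s / 2)) ≤ n * 1 := by
    simpa using mul_measure_le_of_measure_closedBall_eq (isClosed_ballInterior U _).measurableSet hm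
  have hB : n * μ (ballInterior O s) ≤ m * ν (ballInterior O (s / 2)) :=
    measure_closedBall_mul_le_of_measure_closedBall_eq (isClosed_ballInterior O _).measurableSet
      (isClosed_ballInterior O _).measurableSet
      (fun x hx => closedBall_subset_ballInterior (ballInterior_anti (by linarith) hx))
      (fun y hy => hm y (hOU' _ hy))
  rw [← ENNReal.mul_le_mul_iff_right hn0 hntop]
  calc n * (μ (ballInterior O s) * ν (ballInterior U s))
      ≤ m * ν (ballInterior O (s / 2)) * ν (ballInterior U (s / 2)) := by
        rw [← mul_assoc]
        gcongr
        exact ballInterior_anti (by linarith)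
    _ = m * ν (ballInterior U (s / 2)) * ν (ballInterior O (s / 2)) := by ring
    _ ≤ n * 1 * ν O := by
        gcongr
        exact ballInterior_subset (by linarith)
    _ = n * ν O := by rw [mul_one]

lemma measure_mul_le_of_isOpen (hD : Dense D) (hμ : IsInvariantOnRationalBalls μ D U)
    (hU : IsOpen U) {O : Set G} (hO : IsOpen O) (hOU : O ⊆ U) : μ O * ν U ≤ ν O := by
  rw [measure_eq_iSup_ballInterior μ hO, measure_eq_iSup_ballInterior ν hU, ENNReal.iSup_mul]
  refine iSup_le fun i => ?_
  rw [ENNReal.mul_iSup]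
  refine iSup_le fun j => ?_
  set r : ℝ := min (1 / (i + 1)) (1 / (j + 1))
  calc μ (ballInterior O (1 / (i + 1))) * ν (ballInterior U (1 / (j + 1)))
      ≤ μ (ballInterior O r) * ν (ballInterior U r) := by
        gcongr
        exacts [ballInterior_anti (min_le_left _ _), ballInterior_anti (min_le_right _ _)]
    _ ≤ ν O := measure_ballInterior_mul_le hD hμ hOU (lt_min Nat.one_div_pos_of_nat
        Nat.one_div_pos_of_nat)

end Group

end InvariantOnBalls

open InvariantOnBalls

theorem stmt1_general {G : Type*} [Group G] [MetricSpace G] [MeasurableSpace G] [BorelSpace G]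
    [IsTopologicalGroup G] [LocallyCompactSpace G]
    (hleftinv : ∀ g x y : G, dist (g * x) (g * y) = dist x y)
    (ν : Measure G) [ν.IsHaarMeasure]
    (D : Set G) (hDcount : D.Countable) (hDdense : Dense D)
    (U : Set G) (hUopen : IsOpen U)
    (μ : Measure G) [IsProbabilityMeasure μ] (hμsupp : μ Uᶜ = 0)
    (hμinv : ∀ c ∈ D, ∀ q : ℚ, 0 < q → ∀ g ∈ D,
      Metric.closedBall c (q : ℝ) ⊆ U →
      (fun x => g * x) '' Metric.closedBall c (q : ℝ) ⊆ U →
      μ ((fun x => g * x) '' Metric.closedBall c (q : ℝ)) = μ (Metric.closedBall c (q : ℝ))) :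
    ν U < ⊤ ∧ μ = (ν U)⁻¹ • ν.restrict U := by
  have : IsIsometricSMul G G := ⟨fun g => Isometry.of_dist_eq (hleftinv g)⟩
  have : TopologicalSpace.SeparableSpace G := ⟨⟨D, hDcount, hDdense⟩⟩
  have : SecondCountableTopology G := UniformSpace.secondCountable_of_separable G
  have hμU : μ U = 1 := (prob_compl_eq_zero_iff hUopen.measurableSet).mp hμsupp
  have hmul : ∀ O, IsOpen O → O ⊆ U → μ O * ν U ≤ ν O := fun O hO hOU =>
    measure_mul_le_of_isOpen hDdense hμinv hUopen hO hOU
  have hν0 : ν U ≠ 0 :=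
    hUopen.measure_ne_zero ν (nonempty_of_measure_ne_zero (hμU ▸ one_ne_zero))
  have hνtop : ν U ≠ ∞ :=
    measure_ne_top_of_forall_isOpen_mul_le hUopen (hμU ▸ one_ne_zero) hmul
  exact ⟨hνtop.lt_top, eq_smul_restrict_of_forall_isOpen_mul_le hUopen hμsupp hν0 hνtop hmul⟩

/-- Lemma 2.8 (Haar-meas): let `G` be a locally compact group with a left-invariant
metric and left Haar measure `ν`; `D` a countable dense subset, and consider closed
balls with center in `D` and positive rational radius. If a Borel probability
measure `μ` carried by a nonempty open set `U` satisfies `μ(g·B) = μ(B)` for all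
such balls `B` and `g ∈ D` with `B, g·B ⊆ U`, then `ν U < ∞` and
`μ = ν|_U / ν(U)`. -/
theorem stmt1 {G : Type*} [Group G] [MetricSpace G] [MeasurableSpace G] [BorelSpace G]
    [IsTopologicalGroup G] [LocallyCompactSpace G]
    (hleftinv : ∀ g x y : G, dist (g * x) (g * y) = dist x y)
    (ν : Measure G) [ν.IsHaarMeasure]
    (D : Set G) (hDcount : D.Countable) (hDdense : Dense D)
    (U : Set G) (hUopen : IsOpen U) (hUne : U.Nonempty)
    (μ : Measure G) [IsProbabilityMeasure μ] (hμsupp : μ Uᶜ = 0)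
    (hμinv : ∀ c ∈ D, ∀ q : ℚ, 0 < q → ∀ g ∈ D,
      Metric.closedBall c (q : ℝ) ⊆ U →
      (fun x => g * x) '' Metric.closedBall c (q : ℝ) ⊆ U →
      μ ((fun x => g * x) '' Metric.closedBall c (q : ℝ)) = μ (Metric.closedBall c (q : ℝ))) :
    ν U < ⊤ ∧ μ = (ν U)⁻¹ • ν.restrict U :=
  stmt1_general hleftinv ν D hDcount hDdense U hUopen μ hμsupp hμinv
end

section
/- For T > 0 and θ ∈ ℝ, let J(T,θ) = {t ∈ ℝ : ‖g_t R_θ e₂‖ < exp(−T)}, where e₂ = (0,1). Then J(T,θ) is empty if and only if |sin 2θ| ≥ exp(−2T). -/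
open Real MeasureTheory Matrix Set Filter

noncomputable def gMat (t : ℝ) : Matrix (Fin 2) (Fin 2) ℝ :=
  !![Real.exp t, 0; 0, Real.exp (-t)]

noncomputable def RMat (θ : ℝ) : Matrix (Fin 2) (Fin 2) ℝ :=
  !![Real.cos θ, -Real.sin θ; Real.sin θ, Real.cos θ]

def nMat (u : ℝ) : Matrix (Fin 2) (Fin 2) ℝ := !![1, 0; u, 1]

noncomputable def NMat (a b : ℝ) : Matrix (Fin 2) (Fin 2) ℝ := !![a, b; 0, a⁻¹]

/-- Euclidean norm on ℝ². -/
noncomputable def vnorm (v : Fin 2 → ℝ) : ℝ := Real.sqrt (v 0 ^ 2 + v 1 ^ 2)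

def e2 : Fin 2 → ℝ := ![0, 1]

/-- `J T θ = {t : ‖g_t R_θ e₂‖ < exp (-T)}`. -/
noncomputable def J (T θ : ℝ) : Set ℝ :=
  {t | vnorm ((gMat t * RMat θ).mulVec e2) < Real.exp (-T)}

lemma mem_J_iff (T θ t : ℝ) :
    t ∈ J T θ ↔ Real.exp (2*t) * Real.sin θ ^ 2 + Real.exp (-(2*t)) * Real.cos θ ^ 2
      < Real.exp (-(2*T)) := by
  have h1 : vnorm ((gMat t * RMat θ).mulVec e2)
      = Real.sqrt (Real.exp (2*t) * Real.sin θ ^ 2 + Real.exp (-(2*t)) * Real.cos θ ^ 2) := by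
    have e1 : Real.exp (2*t) = Real.exp t * Real.exp t := by
      rw [← Real.exp_add]; ring_nf
    have e2' : Real.exp (-(2*t)) = Real.exp (-t) * Real.exp (-t) := by
      rw [← Real.exp_add]; ring_nf
    have hv : (gMat t * RMat θ).mulVec e2
        = ![-(Real.exp t * Real.sin θ), Real.exp (-t) * Real.cos θ] := by
      funext i
      fin_cases i <;>
        simp [gMat, RMat, e2, Matrix.mulVec, Matrix.mul_apply, Fin.sum_univ_two,
          dotProduct]
    rw [hv]
    simp only [vnorm, Matrix.cons_val_zero, Matrix.cons_val_one, Matrix.head_cons]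
    congr 1
    rw [e1, e2']; ring
  have h2 : Real.exp (-T) = Real.sqrt (Real.exp (-(2*T))) := by
    rw [show (-(2*T)) = (-T) + (-T) by ring, Real.exp_add,
      Real.sqrt_mul_self (Real.exp_nonneg _)]
  rw [show t ∈ J T θ ↔ vnorm ((gMat t * RMat θ).mulVec e2) < Real.exp (-T) from Iff.rfl,
    h1, h2, Real.sqrt_lt_sqrt_iff_of_pos (Real.exp_pos _)]

/-- Proposition 3.4 (first assertion): `J(T,θ)` is empty iff `|sin 2θ| ≥ exp(-2T)`. -/
theorem stmt6 (T θ : ℝ) (hT : 0 < T) :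
    J T θ = ∅ ↔ Real.exp (-(2 * T)) ≤ |Real.sin (2 * θ)| := by
  have habs : |Real.sin (2*θ)| = 2 * |Real.sin θ| * |Real.cos θ| := by
    rw [Real.sin_two_mul, abs_mul, abs_mul, abs_two]
  constructor
  · intro hJ
    by_contra hlt
    push_neg at hlt
    rw [Set.eq_empty_iff_forall_notMem] at hJ
    by_cases hs : Real.sin θ = 0
    · refine hJ (T + 1) ?_
      rw [mem_J_iff, hs]
      have hc : Real.cos θ ^ 2 ≤ 1 := by
        nlinarith [Real.sin_sq_add_cos_sq θ, sq_nonneg (Real.sin θ)]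
      have : Real.exp (-(2*(T+1))) * Real.cos θ ^ 2 ≤ Real.exp (-(2*(T+1))) * 1 :=
        mul_le_mul_of_nonneg_left hc (Real.exp_nonneg _)
      have h2 : Real.exp (-(2*(T+1))) < Real.exp (-(2*T)) := by
        apply Real.exp_lt_exp.2; linarith
      simp only [ne_eq, OfNat.ofNat_ne_zero, not_false_eq_true, zero_pow, mul_zero, zero_add]
      nlinarith
    by_cases hc : Real.cos θ = 0
    · refine hJ (-(T + 1)) ?_
      rw [mem_J_iff, hc]
      have hs1 : Real.sin θ ^ 2 ≤ 1 := by
        nlinarith [Real.sin_sq_add_cos_sq θ, sq_nonneg (Real.cos θ)]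
      have h2 : Real.exp (2*(-(T+1))) < Real.exp (-(2*T)) := by
        apply Real.exp_lt_exp.2; linarith
      simp only [ne_eq, OfNat.ofNat_ne_zero, not_false_eq_true, zero_pow, mul_zero, add_zero]
      nlinarith [Real.exp_pos (2*(-(T+1)))]
    · -- optimal t
      have hsp : 0 < |Real.sin θ| := abs_pos.2 hs
      have hcp : 0 < |Real.cos θ| := abs_pos.2 hc
      set t0 : ℝ := (1/2) * Real.log (|Real.cos θ| / |Real.sin θ|) with ht0
      refine hJ t0 ?_
      rw [mem_J_iff]
      have hA : Real.exp (2*t0) = |Real.cos θ| / |Real.sin θ| := by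
        rw [ht0, show 2 * ((1/2) * Real.log (|Real.cos θ| / |Real.sin θ|))
          = Real.log (|Real.cos θ| / |Real.sin θ|) by ring,
          Real.exp_log (by positivity)]
      have hA' : Real.exp (-(2*t0)) = |Real.sin θ| / |Real.cos θ| := by
        rw [Real.exp_neg, hA, inv_div]
      have hval : Real.exp (2*t0) * Real.sin θ ^ 2 + Real.exp (-(2*t0)) * Real.cos θ ^ 2
          = 2 * |Real.sin θ| * |Real.cos θ| := by
        rw [hA, hA']
        field_simp
        linear_combination (-(|Real.cos θ|^2)) * sq_abs (Real.sin θ)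
          + (-(|Real.sin θ|^2)) * sq_abs (Real.cos θ)
      rw [hval, ← habs]; linarith
  · intro h
    rw [Set.eq_empty_iff_forall_notMem]
    intro t ht
    rw [mem_J_iff] at ht
    have key : 2 * |Real.sin θ| * |Real.cos θ|
        ≤ Real.exp (2*t) * Real.sin θ ^ 2 + Real.exp (-(2*t)) * Real.cos θ ^ 2 := by
      have e1 : Real.exp (2*t) = Real.exp t * Real.exp t := by
        rw [← Real.exp_add]; ring_nf
      have e2' : Real.exp (-(2*t)) = Real.exp (-t) * Real.exp (-t) := by
        rw [← Real.exp_add]; ring_nf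
      have hprod : Real.exp t * Real.exp (-t) = 1 := by
        rw [← Real.exp_add]; simp
      rw [e1, e2', ← sq_abs (Real.sin θ), ← sq_abs (Real.cos θ)]
      nlinarith [sq_nonneg (Real.exp t * |Real.sin θ| - Real.exp (-t) * |Real.cos θ|),
        hprod, mul_nonneg (abs_nonneg (Real.sin θ)) (abs_nonneg (Real.cos θ)),
        Real.exp_pos t, Real.exp_pos (-t)]
    rw [habs] at h
    linarith
end

section
/- 4 · ∫₀¹ log(1/u) · (1 − u²)/(1 + u²)² du = π. -/
/-!
The integrand has the elementary primitive `arctan u - u log u / (1 + u²)`, which is continuous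
on `[0, 1]` (as `u log u → 0`), vanishes at `0` and equals `π / 4` at `1`. The integrand is
singular at `0`, but it is nonnegative on `(0, 1]`, and a nonnegative derivative of a function
continuous on a closed interval is integrable there, so the fundamental theorem of calculus applies.
-/

open Real MeasureTheory Set

lemma continuous_arctan_sub_mul_log_div :
    Continuous fun u : ℝ => arctan u - u * log u / (1 + u ^ 2) :=
  continuous_arctan.sub <|
    continuous_mul_log.div (by fun_prop) fun u => by positivity

lemma hasDerivAt_arctan_sub_mul_log_div {x : ℝ} (hx : 0 < x) :
    HasDerivAt (fun u : ℝ => arctan u - u * log u / (1 + u ^ 2))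
      (log (1 / x) * (1 - x ^ 2) / (1 + x ^ 2) ^ 2) x := by
  have hsq : HasDerivAt (fun u : ℝ => 1 + u ^ 2) (2 * x) x := by
    simpa using (hasDerivAt_pow 2 x).const_add 1
  refine ((hasDerivAt_arctan x).sub
    ((hasDerivAt_mul_log hx.ne').div hsq (by positivity))).congr_deriv ?_
  rw [log_div one_ne_zero hx.ne', log_one]
  field_simp
  ring

lemma log_one_div_mul_one_sub_sq_div_nonneg {x : ℝ} (hx₀ : 0 < x) (hx₁ : x ≤ 1) :
    0 ≤ log (1 / x) * (1 - x ^ 2) / (1 + x ^ 2) ^ 2 := by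
  have hlog : 0 ≤ log (1 / x) := log_nonneg (one_le_one_div hx₀ hx₁)
  have hsq : 0 ≤ 1 - x ^ 2 := by nlinarith
  positivity

lemma integral_log_one_div_mul_one_sub_sq_div {b : ℝ} (hb₀ : 0 ≤ b) (hb₁ : b ≤ 1) :
    ∫ u in (0:ℝ)..b, log (1 / u) * (1 - u ^ 2) / (1 + u ^ 2) ^ 2
      = arctan b - b * log b / (1 + b ^ 2) := by
  have hcont := continuous_arctan_sub_mul_log_div.continuousOn (s := uIcc 0 b)
  have hderiv : ∀ x ∈ Ioo (0:ℝ) b, HasDerivAt (fun u : ℝ => arctan u - u * log u / (1 + u ^ 2))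
      (log (1 / x) * (1 - x ^ 2) / (1 + x ^ 2) ^ 2) x :=
    fun x hx => hasDerivAt_arctan_sub_mul_log_div hx.1
  have hint : IntervalIntegrable
      (fun u : ℝ => log (1 / u) * (1 - u ^ 2) / (1 + u ^ 2) ^ 2) volume 0 b := by
    refine intervalIntegral.intervalIntegrable_deriv_of_nonneg hcont ?_ ?_
    · simpa [hb₀] using hderiv
    · simpa [hb₀] using fun x (hx : x ∈ Ioo 0 b) =>
        log_one_div_mul_one_sub_sq_div_nonneg hx.1 (hx.2.le.trans hb₁)
  rw [intervalIntegral.integral_eq_sub_of_hasDerivAt_of_le hb₀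
    (by simpa [hb₀] using hcont) hderiv hint]
  simp

/-- `4 ∫₀¹ log(1/u) (1 - u²)/(1 + u²)² du = π`. -/
theorem stmt10 :
    4 * ∫ u in (0:ℝ)..1, Real.log (1 / u) * (1 - u ^ 2) / (1 + u ^ 2) ^ 2 = π := by
  rw [integral_log_one_div_mul_one_sub_sq_div zero_le_one le_rfl]
  simp only [arctan_one, log_one, mul_zero, zero_div, sub_zero]
  ring
end

section
/- Let F: (0,∞) → [0,∞) be continuous and non-decreasing with F(ρ) = O(ρ²) as ρ → 0, such that F has a left-derivative F'(ρ) at every ρ with F(ρ) < 1, and suppose that for every such ρ and every T > 0 one has F(ρ·e^{−T}) ≥ (1/2)·e^{−2T}·ρ·F'(ρ). Define c := (1/2)·sup{F'(ρ)/ρ : F(ρ) < 1}. Then c < ∞, lim_{ρ→0} F(ρ)/ρ² = c, and c = (1/2)·limsup_{ρ→0} F'(ρ)/ρ. -/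
/-!
Scaling `ρ ↦ ρ e^{-T}` turns the hypothesis into `F s ≥ (F'(ρ)/ρ) s²/2` for all `s < ρ`; comparing
with `F(s) = O(s²)` bounds `F'(ρ)/ρ` by `2C₀`, so `c < ∞`, and shows `liminf F(s)/s² ≥ c`.
Conversely, if `F'(t) ≤ r t` for all small `t`, a mean value comparison of `F` with `r t²/2` on
`[a, s]`, followed by `a → 0` (where `F(a) = O(a²)`), gives `F(s) ≤ r s²/2`. With `r = 2c` this is the
matching upper bound, and with `r` just above the limsup of `F'(t)/t` it shows that the limsup
is at least `2c`.
-/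

open Set Filter Topology

lemma HasDerivWithinAt.comp_neg_Ici {f : ℝ → ℝ} {f' x : ℝ}
    (h : HasDerivWithinAt f f' (Iio (-x)) (-x)) :
    HasDerivWithinAt (fun y => f (-y)) (-f') (Ici x) x := by
  have hmaps : MapsTo (fun y : ℝ => -y) (Ici x) (Iic (-x)) := fun y hy => show -y ≤ -x from neg_le_neg hy
  exact (h.Iic_of_Iio.comp x (hasDerivAt_neg x).hasDerivWithinAt hmaps).congr_deriv (mul_neg_one f')

theorem sub_le_sub_of_hasDerivWithinAt_Iio_le {f g f' g' : ℝ → ℝ} {a b : ℝ} (hab : a ≤ b)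
    (hf : ContinuousOn f (Icc a b)) (hf' : ∀ x ∈ Ioc a b, HasDerivWithinAt f (f' x) (Iio x) x)
    (hg : ContinuousOn g (Icc a b)) (hg' : ∀ x ∈ Ioc a b, HasDerivWithinAt g (g' x) (Iio x) x)
    (hle : ∀ x ∈ Ioc a b, f' x ≤ g' x) :
    f b - f a ≤ g b - g a := by
  have hmaps : MapsTo (fun x : ℝ => -x) (Icc (-b) (-a)) (Icc a b) :=
    fun x hx => ⟨le_neg_of_le_neg hx.2, neg_le_of_neg_le hx.1⟩
  have hmem : ∀ x ∈ Ico (-b) (-a), -x ∈ Ioc a b :=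
    fun x hx => ⟨lt_neg_of_lt_neg hx.2, neg_le_of_neg_le hx.1⟩
  have key := image_le_of_deriv_right_le_deriv_boundary
    (f := fun x => f b - f (-x)) (f' := fun x => f' (-x))
    (B := fun x => g b - g (-x)) (B' := fun x => g' (-x))
    (continuousOn_const.sub (hf.comp continuous_neg.continuousOn hmaps))
    (fun x hx => by simpa using ((hf' _ (hmem x hx)).comp_neg_Ici).const_sub (f b))
    (by simp)
    (continuousOn_const.sub (hg.comp continuous_neg.continuousOn hmaps))
    (fun x hx => by simpa using ((hg' _ (hmem x hx)).comp_neg_Ici).const_sub (g b))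
    (fun x hx => hle _ (hmem x hx)) (x := -a) ⟨neg_le_neg hab, le_rfl⟩
  simpa using key

lemma HasDerivWithinAt.nonneg_of_monotoneOn_Ioo {f : ℝ → ℝ} {f' a b : ℝ} (hab : a < b)
    (hf : MonotoneOn f (Ioo a b)) (h : HasDerivWithinAt f f' (Iio b) b) : 0 ≤ f' := by
  refine (h.mono Ioo_subset_Iio_self).nonneg_of_monotoneOn ?_ hf
  rw [accPt_principal_iff_nhdsWithin, sdiff_singleton_eq_self (fun h => h.2.false)]
  exact right_nhdsWithin_Ioo_neBot hab

theorem le_of_eventually_mul_sq_le_le {F : ℝ → ℝ} {a b : ℝ}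
    (ha : ∀ᶠ s in 𝓝[>] 0, a * s ^ 2 ≤ F s) (hb : ∀ᶠ s in 𝓝[>] 0, F s ≤ b * s ^ 2) : a ≤ b := by
  obtain ⟨s, hs, has, hsb⟩ := (eventually_mem_nhdsWithin.and (ha.and hb)).exists
  exact le_of_mul_le_mul_right (has.trans hsb) (pow_pos hs 2)

theorem tendsto_div_sq_of_eventually_le {F : ℝ → ℝ} {c : ℝ}
    (hlower : ∀ a < c, ∀ᶠ s in 𝓝[>] 0, a * s ^ 2 ≤ F s)
    (hupper : ∀ᶠ s in 𝓝[>] 0, F s ≤ c * s ^ 2) :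
    Tendsto (fun s => F s / s ^ 2) (𝓝[>] 0) (𝓝 c) := by
  rw [tendsto_order]
  refine ⟨fun a ha => ?_, fun b hb => ?_⟩
  · obtain ⟨a', haa', ha'c⟩ := exists_between ha
    filter_upwards [self_mem_nhdsWithin, hlower a' ha'c] with s (hs : 0 < s) hle
    rw [lt_div_iff₀ (pow_pos hs 2)]
    nlinarith [pow_pos hs 2]
  · filter_upwards [self_mem_nhdsWithin, hupper] with s (hs : 0 < s) hle
    rw [div_lt_iff₀ (pow_pos hs 2)]
    nlinarith [pow_pos hs 2]

theorem eventually_mul_sq_le_of_exp_scaling {F : ℝ → ℝ} {ρ d : ℝ} (hρ : 0 < ρ)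
    (h : ∀ T > (0:ℝ), (1 / 2) * Real.exp (-(2 * T)) * ρ * d ≤ F (ρ * Real.exp (-T))) :
    ∀ᶠ s in 𝓝[>] 0, d / ρ / 2 * s ^ 2 ≤ F s := by
  filter_upwards [Ioo_mem_nhdsGT hρ] with s ⟨hs, hsρ⟩
  have hT : 0 < Real.log (ρ / s) := Real.log_pos ((one_lt_div hs).2 hsρ)
  have hexp : Real.exp (-Real.log (ρ / s)) = s / ρ := by
    rw [Real.exp_neg, Real.exp_log (by positivity), inv_div]
  have hexp2 : Real.exp (-(2 * Real.log (ρ / s))) = (s / ρ) ^ 2 := by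
    rw [show -(2 * Real.log (ρ / s)) = -Real.log (ρ / s) + -Real.log (ρ / s) by ring,
      Real.exp_add, hexp, sq]
  have key := h _ hT
  rw [hexp, hexp2, mul_div_cancel₀ s hρ.ne'] at key
  calc d / ρ / 2 * s ^ 2 = 1 / 2 * (s / ρ) ^ 2 * ρ * d := by field_simp
    _ ≤ F s := key

theorem eventually_le_mul_sq_of_hasDerivWithinAt_Iio {F F' : ℝ → ℝ} {r C : ℝ}
    (hcont : ContinuousOn F (Ioi 0))
    (hderiv : ∀ᶠ t in 𝓝[>] 0, HasDerivWithinAt F (F' t) (Iio t) t ∧ F' t ≤ r * t)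
    (hquad : ∀ᶠ a in 𝓝[>] 0, F a ≤ C * a ^ 2) :
    ∀ᶠ s in 𝓝[>] 0, F s ≤ r / 2 * s ^ 2 := by
  obtain ⟨δ, hδ, hsub⟩ := mem_nhdsGT_iff_exists_Ioo_subset.1 hderiv
  filter_upwards [Ioo_mem_nhdsGT hδ] with s ⟨hs, hsδ⟩
  have hsq : ∀ x, HasDerivWithinAt (fun y => r / 2 * y ^ 2) (r * x) (Iio x) x := fun x =>
    (((hasDerivAt_pow 2 x).const_mul (r / 2)).hasDerivWithinAt).congr_deriv (by push_cast; ring)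
  have hstep : ∀ a ∈ Ioo 0 s, F s ≤ F a + r / 2 * (s ^ 2 - a ^ 2) := fun a ⟨ha, has⟩ => by
    have hIoc : ∀ x ∈ Ioc a s, x ∈ Ioo 0 δ := fun x hx => ⟨ha.trans hx.1, hx.2.trans_lt hsδ⟩
    have := sub_le_sub_of_hasDerivWithinAt_Iio_le has.le
      (hcont.mono fun x hx => ha.trans_le hx.1) (fun x hx => (hsub (hIoc x hx)).1)
      (by fun_prop) (fun x _ => hsq x) (fun x hx => (hsub (hIoc x hx)).2)
    linarith
  have hlim : Tendsto (fun a => C * a ^ 2 + r / 2 * (s ^ 2 - a ^ 2)) (𝓝[>] 0)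
      (𝓝 (r / 2 * s ^ 2)) := by
    have : Continuous fun a : ℝ => C * a ^ 2 + r / 2 * (s ^ 2 - a ^ 2) := by fun_prop
    simpa using (this.tendsto 0).mono_left nhdsWithin_le_nhds
  refine ge_of_tendsto hlim ?_
  filter_upwards [Ioo_mem_nhdsGT hs, hquad] with a ha hFa
  linarith [hstep a ha]

theorem stmt16_general (F F' : ℝ → ℝ)
    (hcont : ContinuousOn F (Set.Ioi 0))
    (hmono : MonotoneOn F (Set.Ioi 0))
    (hO : ∃ C₀ > (0:ℝ), ∃ ε > (0:ℝ), ∀ ρ ∈ Set.Ioo (0:ℝ) ε, F ρ ≤ C₀ * ρ ^ 2)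
    (hderiv : ∀ ρ > (0:ℝ), F ρ < 1 → HasDerivWithinAt F (F' ρ) (Set.Iio ρ) ρ)
    (hineq : ∀ ρ > (0:ℝ), F ρ < 1 → ∀ T > (0:ℝ),
      (1 / 2) * Real.exp (-(2 * T)) * ρ * F' ρ ≤ F (ρ * Real.exp (-T))) :
    BddAbove {x : ℝ | ∃ ρ > (0:ℝ), F ρ < 1 ∧ x = F' ρ / ρ} ∧
    Filter.Tendsto (fun ρ => F ρ / ρ ^ 2) (nhdsWithin 0 (Set.Ioi 0))
      (nhds ((1 / 2) * sSup {x : ℝ | ∃ ρ > (0:ℝ), F ρ < 1 ∧ x = F' ρ / ρ})) ∧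
    (1 / 2) * sSup {x : ℝ | ∃ ρ > (0:ℝ), F ρ < 1 ∧ x = F' ρ / ρ}
      = (1 / 2) * Filter.limsup (fun ρ => F' ρ / ρ) (nhdsWithin 0 (Set.Ioi 0)) := by
  obtain ⟨C₀, -, ε, hε, hO⟩ := hO
  set S := {x : ℝ | ∃ ρ > (0:ℝ), F ρ < 1 ∧ x = F' ρ / ρ}
  have hquad : ∀ᶠ s in 𝓝[>] 0, F s ≤ C₀ * s ^ 2 := mem_of_superset (Ioo_mem_nhdsGT hε) hO
  have hsmall : ∀ᶠ s in 𝓝[>] 0, 0 < s ∧ F s < 1 := by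
    have : Tendsto (fun s : ℝ => C₀ * s ^ 2) (𝓝[>] 0) (𝓝 0) := by
      have : Continuous fun s : ℝ => C₀ * s ^ 2 := by fun_prop
      simpa using (this.tendsto 0).mono_left nhdsWithin_le_nhds
    filter_upwards [self_mem_nhdsWithin, hquad, this.eventually (gt_mem_nhds one_pos)]
      with s hs hFs hCs
    exact ⟨hs, hFs.trans_lt hCs⟩
  have hlower : ∀ x ∈ S, ∀ᶠ s in 𝓝[>] 0, x / 2 * s ^ 2 ≤ F s := by
    rintro _ ⟨ρ, hρ, hρ1, rfl⟩
    exact eventually_mul_sq_le_of_exp_scaling hρ (hineq ρ hρ hρ1)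
  have hupper : ∀ r, (∀ᶠ t in 𝓝[>] 0, F' t / t ≤ r) → ∀ᶠ s in 𝓝[>] 0, F s ≤ r / 2 * s ^ 2 := by
    refine fun r hr => eventually_le_mul_sq_of_hasDerivWithinAt_Iio (F' := F') hcont ?_ hquad
    filter_upwards [hr, hsmall] with t ht ⟨ht0, ht1⟩
    exact ⟨hderiv t ht0 ht1, (div_le_iff₀ ht0).1 ht⟩
  have hbdd : BddAbove S :=
    ⟨2 * C₀, fun x hx => by linarith [le_of_eventually_mul_sq_le_le (hlower x hx) hquad]⟩
  have hne : S.Nonempty :=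
    let ⟨ρ, hρ, hρ1⟩ := hsmall.exists
    ⟨_, ρ, hρ, hρ1, rfl⟩
  have hratio : ∀ᶠ t in 𝓝[>] 0, 0 ≤ F' t / t ∧ F' t / t ≤ sSup S := by
    filter_upwards [hsmall] with t ⟨ht0, ht1⟩
    have hF't := (hderiv t ht0 ht1).nonneg_of_monotoneOn_Ioo ht0 (hmono.mono Ioo_subset_Ioi_self)
    exact ⟨div_nonneg hF't ht0.le, le_csSup hbdd ⟨t, ht0, ht1, rfl⟩⟩
  have hlim : Tendsto (fun s => F s / s ^ 2) (𝓝[>] 0) (𝓝 (sSup S / 2)) := by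
    refine tendsto_div_sq_of_eventually_le (fun a ha => ?_) (hupper _ (hratio.mono fun _ h => h.2))
    obtain ⟨x, hx, hax⟩ := exists_lt_of_lt_csSup hne (by linarith : 2 * a < sSup S)
    filter_upwards [hlower x hx] with s hs
    nlinarith [sq_nonneg s]
  have hbddU : IsBoundedUnder (· ≤ ·) (𝓝[>] 0) (fun t => F' t / t) :=
    ⟨sSup S, hratio.mono fun _ h => h.2⟩
  have hbddL : IsBoundedUnder (· ≥ ·) (𝓝[>] 0) (fun t => F' t / t) :=
    ⟨0, hratio.mono fun _ h => h.1⟩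
  refine ⟨hbdd, by simpa [div_eq_inv_mul] using hlim, congrArg _ (le_antisymm ?_ ?_)⟩
  · refine le_of_forall_gt_imp_ge_of_dense fun r hr => csSup_le hne fun x hx => ?_
    have hr' := hupper r ((eventually_lt_of_limsup_lt hr hbddU).mono fun _ => le_of_lt)
    linarith [le_of_eventually_mul_sq_le_le (hlower x hx) hr']
  · exact limsup_le_of_le hbddL.isCoboundedUnder_flip (hratio.mono fun _ h => h.2)

/-- Corollary 6.2: let `F : (0,∞) → [0,∞)` be continuous, non-decreasing, with
`F ρ = O(ρ²)` as `ρ → 0`, having at every `ρ` with `F ρ < 1` a left-derivative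
`F' ρ`, and satisfying `F(ρ e^{-T}) ≥ (1/2) e^{-2T} ρ F'(ρ)` for all such `ρ` and
all `T > 0`. With `c := (1/2) sup {F'(ρ)/ρ : F ρ < 1}`, one has `c < ∞` (the set is
bounded above), `lim_{ρ→0⁺} F(ρ)/ρ² = c`, and
`c = (1/2) limsup_{ρ→0⁺} F'(ρ)/ρ`. -/
theorem stmt16 (F F' : ℝ → ℝ)
    (hcont : ContinuousOn F (Set.Ioi 0))
    (hmono : MonotoneOn F (Set.Ioi 0))
    (hnonneg : ∀ ρ > (0:ℝ), 0 ≤ F ρ)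
    (hO : ∃ C₀ > (0:ℝ), ∃ ε > (0:ℝ), ∀ ρ ∈ Set.Ioo (0:ℝ) ε, F ρ ≤ C₀ * ρ ^ 2)
    (hderiv : ∀ ρ > (0:ℝ), F ρ < 1 → HasDerivWithinAt F (F' ρ) (Set.Iio ρ) ρ)
    (hineq : ∀ ρ > (0:ℝ), F ρ < 1 → ∀ T > (0:ℝ),
      (1 / 2) * Real.exp (-(2 * T)) * ρ * F' ρ ≤ F (ρ * Real.exp (-T))) :
    BddAbove {x : ℝ | ∃ ρ > (0:ℝ), F ρ < 1 ∧ x = F' ρ / ρ} ∧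
    Filter.Tendsto (fun ρ => F ρ / ρ ^ 2) (nhdsWithin 0 (Set.Ioi 0))
      (nhds ((1 / 2) * sSup {x : ℝ | ∃ ρ > (0:ℝ), F ρ < 1 ∧ x = F' ρ / ρ})) ∧
    (1 / 2) * sSup {x : ℝ | ∃ ρ > (0:ℝ), F ρ < 1 ∧ x = F' ρ / ρ}
      = (1 / 2) * Filter.limsup (fun ρ => F' ρ / ρ) (nhdsWithin 0 (Set.Ioi 0)) :=
  stmt16_general F F' hcont hmono hO hderiv hineq
end

section
/- Fix ω₀ ∈ (0, π/2] and A > 1, and fix θ̄₀ > 0. There exists T₀ = T₀(A, θ̄₀) such that for all T ≥ T₀, all θ with |sin 2θ| < exp(−2T), all θ' with θ̄₀ ≤ |θ'| < π/2, and all t ∈ J(T,θ), one has ‖g_t R_{θ+θ'} e₂‖ ≥ A·‖g_t R_θ e₂‖. -/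
open Real MeasureTheory Matrix Set Filter

lemma norm_eq17 (t φ : ℝ) : vnorm ((gMat t * RMat φ).mulVec e2)
    = Real.sqrt ((Real.exp t * Real.sin φ)^2 + (Real.exp (-t) * Real.cos φ)^2) := by
  simp [vnorm, gMat, RMat, e2, Matrix.mulVec, Matrix.mul_apply, Fin.sum_univ_two,
    dotProduct]

lemma abs_add_lb17 (a b : ℝ) : |b| - |a| ≤ |a + b| := by
  have h := abs_add_le (a + b) (-a)
  rw [abs_neg] at h
  have h2 : a + b + (-a) = b := by ring
  rw [h2] at h
  linarith

lemma half_le17 (y : ℝ) (h0 : 0 ≤ y) (h : 1/4 ≤ y^2) : 1/2 ≤ y := by nlinarith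

lemma small_abs17 (s co e c4 : ℝ) (hs : 0 ≤ s) (hco : 1/2 ≤ co) (h : 2*s*co < e)
    (he : e ≤ c4) : s ≤ c4 := by nlinarith

lemma Xlb17 (a b s co : ℝ) (h : 1/4 ≤ co^2) : b^2*(1/4) ≤ (a*s)^2 + (b*co)^2 := by
  nlinarith [sq_nonneg (a*s), sq_nonneg b]

lemma lar17 (u v P X : ℝ) (huv : u*v = 1) (hu : 0 < u) (hP : 0 < P)
    (h1 : v^2*(1/4) ≤ X) (h2 : X < P) : P ≤ 4*u^2*P^2 := by
  have huv2 : u^2 * v^2 = 1 := by nlinarith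
  nlinarith [mul_le_mul_of_nonneg_left (show v^2 ≤ 4*P by linarith)
    (by positivity : (0:ℝ) ≤ u^2*P)]

lemma Ylb17 (q r x c : ℝ) (h : c/4 ≤ |x|) (hc : 0 ≤ c) (hq : 0 < q) :
    q^2*(c/4)^2 ≤ (q*x)^2 + r^2 := by
  have h2 : (c/4)^2 ≤ x^2 := by nlinarith [sq_abs x, abs_nonneg x]
  nlinarith [sq_nonneg r, mul_pos hq hq]

lemma absmul_lb17 (a b c : ℝ) (ha : 1/2 ≤ |a|) (hb : c ≤ |b|) (hc : 0 ≤ c) :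
    (1/2)*c ≤ |a*b| := by rw [abs_mul]; nlinarith [abs_nonneg a, abs_nonneg b]

lemma absmul_ub17 (a b c4 : ℝ) (ha : |a| ≤ c4) (hb : |b| ≤ 1) : |a*b| ≤ c4 := by
  rw [abs_mul]; nlinarith [abs_nonneg a, abs_nonneg b]

lemma final_combine17 (A c P E4 Q Y : ℝ) (hP : 0 < P) (hQ : 0 < Q) (hc : 0 < c)
    (h14 : E4 * P * P = 1) (hE2 : 64 * A^2 / c^2 ≤ E4) (hlar : P ≤ 4 * Q * P^2)
    (hYlb : Q * (c/4)^2 ≤ Y) : A^2 * P ≤ Y := by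
  have hE4pos : 0 < E4 := by nlinarith
  have h1 : E4 * P ≤ 4 * Q := by nlinarith [mul_le_mul_of_nonneg_left hlar hE4pos.le]
  have h2 : A^2 * P ≤ (E4 * P) * c^2 / 64 := by
    have h3 := mul_le_mul_of_nonneg_right hE2 (by positivity : (0:ℝ) ≤ P * c^2 / 64)
    have key : (64 * A^2 / c^2) * (P * c^2 / 64) = A^2 * P := by field_simp
    have key2 : E4 * (P * c^2 / 64) = (E4 * P) * c^2 / 64 := by ring
    linarith [key ▸ key2 ▸ h3]
  calc A^2 * P ≤ (E4*P) * c^2/64 := h2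
    _ ≤ 4 * Q * c^2 / 64 := by nlinarith
    _ = Q * (c/4)^2 := by ring
    _ ≤ Y := hYlb

set_option maxHeartbeats 1000000 in
/-- Inequality (e.C): fixing `ω₀ ∈ (0, π/2]`, `A > 1`, `θ̄₀ > 0`, there is
`T₀ = T₀(A, θ̄₀)` such that for `T ≥ T₀`, `|sin 2θ| < exp(-2T)`,
`θ̄₀ ≤ |θ'| < π/2` and `t ∈ J(T,θ)`, one has
`‖g_t R_{θ+θ'} e₂‖ ≥ A ‖g_t R_θ e₂‖`. -/
theorem stmt17 (ω₀ A θbar : ℝ) (hω₀ : ω₀ ∈ Set.Ioc 0 (π / 2)) (hA : 1 < A)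
    (hθbar : 0 < θbar) :
    ∃ T₀ > (0:ℝ), ∀ T ≥ T₀, ∀ θ : ℝ, |Real.sin (2 * θ)| < Real.exp (-(2 * T)) →
      ∀ θ' : ℝ, θbar ≤ |θ'| → |θ'| < π / 2 → ∀ t ∈ J T θ,
        A * vnorm ((gMat t * RMat θ).mulVec e2)
          ≤ vnorm ((gMat t * RMat (θ + θ')).mulVec e2) := by
  have hπ : (0:ℝ) < π := Real.pi_pos
  set m : ℝ := min θbar (π/4) with hm
  have hm0 : 0 < m := lt_min hθbar (by positivity)
  have hmπ : m < π := lt_of_le_of_lt (min_le_right _ _) (by linarith)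
  set c : ℝ := Real.sin m with hcdef
  have hc : 0 < c := Real.sin_pos_of_pos_of_lt_pi hm0 hmπ
  have hc1 : c ≤ 1 := Real.sin_le_one m
  have hA0 : (0:ℝ) < A := by linarith
  have hlog1 : 0 < Real.log (64 * A^2 / c^2) := by
    apply Real.log_pos
    have : (64:ℝ) ≤ 64 * A^2 / c^2 := by
      rw [le_div_iff₀ (by positivity)]
      nlinarith
    linarith
  have hlog2 : 0 < Real.log (4 / c) := by
    apply Real.log_pos
    have : (4:ℝ) ≤ 4 / c := by
      rw [le_div_iff₀ hc]; nlinarith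
    linarith
  refine ⟨Real.log (64 * A^2 / c^2) + Real.log (4 / c) + 1, by linarith, ?_⟩
  intro T hT θ hθ θ' hθ'1 hθ'2 t ht
  have hT0 : 0 < T := by linarith
  -- key exponential bounds
  have hE1 : Real.exp (-(2*T)) ≤ c/4 := by
    have h1 : Real.exp (-(2*T)) ≤ Real.exp (-(Real.log (4/c))) :=
      Real.exp_le_exp.2 (by linarith)
    have h2 : Real.exp (-(Real.log (4/c))) = c/4 := by
      rw [Real.exp_neg, Real.exp_log (by positivity)]
      field_simp
    linarith [h1, h2.le, h2.ge]
  have hE2 : 64 * A^2 / c^2 ≤ Real.exp (4*T) := by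
    calc 64 * A^2 / c^2 = Real.exp (Real.log (64 * A^2 / c^2)) :=
          (Real.exp_log (by positivity)).symm
      _ ≤ Real.exp (4*T) := Real.exp_le_exp.2 (by linarith)
  -- |sin θ'| ≥ c
  have hsinθ' : c ≤ |Real.sin θ'| := by
    have habs : |Real.sin θ'| = Real.sin |θ'| := by
      rcases le_or_gt 0 θ' with h | h
      · rw [abs_of_nonneg h, abs_of_nonneg]
        exact Real.sin_nonneg_of_nonneg_of_le_pi h (by linarith [abs_of_nonneg h, hθ'2])
      · have hsn : Real.sin θ' ≤ 0 := by
          apply Real.sin_nonpos_of_nonpos_of_neg_pi_le h.le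
          rw [abs_of_neg h] at hθ'2; linarith
        rw [abs_of_neg h, Real.sin_neg, abs_of_nonpos hsn]
    rw [habs]
    apply Real.strictMonoOn_sin.monotoneOn
    · constructor
      · linarith
      · linarith [min_le_right θbar (π/4)]
    · constructor
      · linarith [abs_nonneg θ']
      · linarith
    · linarith [min_le_left θbar (π/4)]
  -- unpack t ∈ J T θ
  simp only [_root_.J, Set.mem_setOf_eq, norm_eq17] at ht
  rw [norm_eq17, norm_eq17]
  set X := (Real.exp t * Real.sin θ)^2 + (Real.exp (-t) * Real.cos θ)^2 with hX
  set Y := (Real.exp t * Real.sin (θ+θ'))^2 + (Real.exp (-t) * Real.cos (θ+θ'))^2 with hY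
  have hX0 : 0 ≤ X := by positivity
  have hXlt : X < (Real.exp (-T))^2 := (Real.sqrt_lt' (Real.exp_pos _)).1 ht
  -- suffices squared inequality
  suffices h : A^2 * (Real.exp (-T))^2 ≤ Y by
    have h1 : A * Real.sqrt X ≤ A * Real.exp (-T) :=
      mul_le_mul_of_nonneg_left (le_of_lt ht) hA0.le
    have h2 : A * Real.exp (-T) ≤ Real.sqrt Y := by
      rw [show A * Real.exp (-T) = Real.sqrt ((A * Real.exp (-T))^2) from
        (Real.sqrt_sq (by positivity)).symm]
      apply Real.sqrt_le_sqrt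
      calc (A * Real.exp (-T))^2 = A^2 * (Real.exp (-T))^2 := by ring
        _ ≤ Y := h
    linarith
  -- common facts
  have habs2 : 2 * |Real.sin θ| * |Real.cos θ| < Real.exp (-(2*T)) := by
    have h1 : |Real.sin (2*θ)| = 2 * |Real.sin θ| * |Real.cos θ| := by
      rw [Real.sin_two_mul, abs_mul, abs_mul]
      simp [abs_of_nonneg]
    linarith [h1 ▸ hθ]
  have hPsq : (Real.exp (-T))^2 = Real.exp (-(2*T)) := by
    rw [sq, ← Real.exp_add]; ring_nf
  have hexp4T : Real.exp (4*T) * (Real.exp (-T))^2 * (Real.exp (-T))^2 = 1 := by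
    rw [hPsq, ← Real.exp_add, ← Real.exp_add,
      show 4*T + -(2*T) + -(2*T) = 0 by ring, Real.exp_zero]
  have hexp2t : Real.exp t * Real.exp (-t) = 1 := by
    rw [← Real.exp_add]; simp
  have hpyth : Real.sin θ ^ 2 + Real.cos θ ^ 2 = 1 := Real.sin_sq_add_cos_sq θ
  have hcosθ'1 : |Real.cos θ'| ≤ 1 := Real.abs_cos_le_one θ'
  have hPpos : 0 < (Real.exp (-T))^2 := by positivity
  rcases le_or_gt (1/4 : ℝ) (Real.cos θ ^ 2) with hcase | hcase
  · -- cos² θ ≥ 1/4 : e^{2t} is large, |sin θ| is small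
    have hcoshalf : 1/2 ≤ |Real.cos θ| :=
      half_le17 _ (abs_nonneg _) (by rw [sq_abs]; exact hcase)
    have hsinsmall : |Real.sin θ| ≤ c/4 :=
      small_abs17 _ _ _ _ (abs_nonneg _) hcoshalf habs2 hE1
    have h1 : (Real.exp (-t))^2 * (1/4) ≤ X :=
      Xlb17 (Real.exp t) (Real.exp (-t)) (Real.sin θ) (Real.cos θ) hcase
    have hlar : (Real.exp (-T))^2 ≤ 4 * (Real.exp t)^2 * ((Real.exp (-T))^2)^2 :=
      lar17 _ _ _ _ hexp2t (Real.exp_pos t) hPpos h1 hXlt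
    have hsinadd : c/4 ≤ |Real.sin (θ+θ')| := by
      rw [Real.sin_add]
      have ha := absmul_lb17 (Real.cos θ) (Real.sin θ') c hcoshalf hsinθ' hc.le
      have hb := absmul_ub17 (Real.sin θ) (Real.cos θ') (c/4) hsinsmall hcosθ'1
      have h3 := abs_add_lb17 (Real.sin θ * Real.cos θ') (Real.cos θ * Real.sin θ')
      linarith
    have hYlb : (Real.exp t)^2 * (c/4)^2 ≤ Y := by
      have := Ylb17 (Real.exp t) (Real.exp (-t) * Real.cos (θ+θ')) (Real.sin (θ+θ')) c
        hsinadd hc.le (Real.exp_pos t)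
      rw [hY]; linarith
    exact final_combine17 A c _ _ _ Y hPpos (by positivity) hc hexp4T hE2 hlar hYlb
  · -- sin² θ ≥ 3/4 : e^{-2t} is large, |cos θ| is small
    have hsinsq : 1/4 ≤ Real.sin θ ^ 2 := by linarith
    have hsinhalf : 1/2 ≤ |Real.sin θ| :=
      half_le17 _ (abs_nonneg _) (by rw [sq_abs]; exact hsinsq)
    have hswap : 2 * |Real.cos θ| * |Real.sin θ| < Real.exp (-(2*T)) := by
      have : 2 * |Real.cos θ| * |Real.sin θ| = 2 * |Real.sin θ| * |Real.cos θ| := by ring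
      linarith [this ▸ habs2]
    have hcossmall : |Real.cos θ| ≤ c/4 :=
      small_abs17 _ _ _ _ (abs_nonneg _) hsinhalf hswap hE1
    have h1 : (Real.exp t)^2 * (1/4) ≤ X := by
      have := Xlb17 (Real.exp (-t)) (Real.exp t) (Real.cos θ) (Real.sin θ) hsinsq
      rw [hX]; linarith
    have hexp2t' : Real.exp (-t) * Real.exp t = 1 := by
      rw [mul_comm]; exact hexp2t
    have hlar : (Real.exp (-T))^2 ≤ 4 * (Real.exp (-t))^2 * ((Real.exp (-T))^2)^2 :=
      lar17 _ _ _ _ hexp2t' (Real.exp_pos (-t)) hPpos h1 hXlt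
    have hcosadd : c/4 ≤ |Real.cos (θ+θ')| := by
      rw [Real.cos_add]
      have ha := absmul_lb17 (Real.sin θ) (Real.sin θ') c hsinhalf hsinθ' hc.le
      have hb := absmul_ub17 (Real.cos θ) (Real.cos θ') (c/4) hcossmall hcosθ'1
      have h3 := abs_add_lb17 (Real.cos θ * Real.cos θ') (-(Real.sin θ * Real.sin θ'))
      rw [abs_neg] at h3
      have h4 : Real.cos θ * Real.cos θ' + -(Real.sin θ * Real.sin θ')
          = Real.cos θ * Real.cos θ' - Real.sin θ * Real.sin θ' := by ring
      rw [h4] at h3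
      linarith
    have hYlb : (Real.exp (-t))^2 * (c/4)^2 ≤ Y := by
      have := Ylb17 (Real.exp (-t)) (Real.exp t * Real.sin (θ+θ')) (Real.cos (θ+θ')) c
        hcosadd hc.le (Real.exp_pos (-t))
      rw [hY]; linarith
    exact final_combine17 A c _ _ _ Y hPpos (by positivity) hc hexp4T hE2 hlar hYlb
end

section
/- Let v = (p,0) and v' = (0,r) be nonzero orthogonal vectors in ℝ² with 1/3 ≤ |p|, |r| ≤ 3. For small τ > 0, the set of (a,b) ∈ ℝ_{>0} × ℝ such that exp(−2τ) ≤ p²a² ≤ exp(2τ) and exp(−2τ) ≤ r²(b² + a^{−2}) ≤ exp(2τ) has Lebesgue measure O(τ^{3/2}), with an implied constant independent of p, r in the given range. -/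
open Real MeasureTheory Set

lemma my_sqrt_sub (L U : ℝ) (h : L ≤ U) :
    Real.sqrt U - Real.sqrt L ≤ Real.sqrt (U - L) := by
  rcases le_or_gt L 0 with hL | hL
  · rw [Real.sqrt_eq_zero_of_nonpos hL]
    have : U ≤ U - L := by linarith
    simpa using Real.sqrt_le_sqrt this
  · rw [sub_le_iff_le_add]
    have h1 : (0:ℝ) ≤ Real.sqrt (U - L) + Real.sqrt L := by positivity
    rw [show Real.sqrt (U-L) + Real.sqrt L = Real.sqrt ((Real.sqrt (U-L) + Real.sqrt L)^2)
      from (Real.sqrt_sq h1).symm]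
    apply Real.sqrt_le_sqrt
    have s1 : Real.sqrt L ^ 2 = L := Real.sq_sqrt hL.le
    have s2 : Real.sqrt (U - L) ^ 2 = U - L := Real.sq_sqrt (by linarith)
    nlinarith [Real.sqrt_nonneg L, Real.sqrt_nonneg (U - L)]

lemma my_exp_sub (x : ℝ) (h0 : 0 ≤ x) (h1 : x ≤ 1/2) :
    Real.exp x - Real.exp (-x) ≤ 4 * x := by
  have h2 : (-(2*x)) + 1 ≤ Real.exp (-(2*x)) := Real.add_one_le_exp _
  have h3 : Real.exp (-(2*x)) * Real.exp x = Real.exp (-x) := by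
    rw [← Real.exp_add]; ring_nf
  have h4 : Real.exp x ≤ 2 := by
    have h5 : Real.exp x ≤ Real.exp (1/2) := Real.exp_le_exp.mpr h1
    have h6 : Real.exp (1/2) * Real.exp (1/2) = Real.exp 1 := by
      rw [← Real.exp_add]; norm_num
    have h7 : Real.exp 1 < 2.7182818286 := Real.exp_one_lt_d9
    nlinarith [Real.exp_pos (1/2)]
  have h8 : (1 - 2*x) * Real.exp x ≤ Real.exp (-x) := by
    nlinarith [mul_le_mul_of_nonneg_right h2 (Real.exp_pos x).le]
  nlinarith [mul_le_mul_of_nonneg_left h4 (by linarith : (0:ℝ) ≤ 2*x)]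


lemma my_le_of_sq_le_sq (x y : ℝ) (hx : 0 ≤ x) (hy : 0 ≤ y) (h : x^2 ≤ y^2) : x ≤ y := by
  nlinarith


set_option maxHeartbeats 2000000 in
/-- The key orthogonal case of Proposition 3.3: for orthogonal vectors
`v = (p,0)`, `v' = (0,r)` with `1/3 ≤ |p|, |r| ≤ 3`, the set of Iwasawa parameters
`(a, b) ∈ ℝ_{>0} × ℝ` with `exp(-2τ) ≤ p²a² ≤ exp(2τ)` and
`exp(-2τ) ≤ r²(b² + a⁻²) ≤ exp(2τ)` has Lebesgue measure `O(τ^{3/2})` for small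
`τ`, uniformly in `p, r` in the given range. -/
theorem stmt19 :
    ∃ C > (0:ℝ), ∃ τ₀ > (0:ℝ), ∀ p r : ℝ,
      1 / 3 ≤ |p| → |p| ≤ 3 → 1 / 3 ≤ |r| → |r| ≤ 3 →
      ∀ τ : ℝ, 0 < τ → τ < τ₀ →
        volume {x : ℝ × ℝ | 0 < x.1 ∧
          Real.exp (-(2 * τ)) ≤ p ^ 2 * x.1 ^ 2 ∧ p ^ 2 * x.1 ^ 2 ≤ Real.exp (2 * τ) ∧
          Real.exp (-(2 * τ)) ≤ r ^ 2 * (x.2 ^ 2 + (x.1⁻¹) ^ 2) ∧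
          r ^ 2 * (x.2 ^ 2 + (x.1⁻¹) ^ 2) ≤ Real.exp (2 * τ)}
          ≤ ENNReal.ofReal (C * τ ^ ((3:ℝ) / 2)) := by
  refine ⟨1000, by norm_num, 1/4, by norm_num, ?_⟩
  intro p r hp1 hp2 hr1 hr2 τ hτ hτ4
  have hpa : (0:ℝ) < |p| := lt_of_lt_of_le (by norm_num) hp1
  have hra : (0:ℝ) < |r| := lt_of_lt_of_le (by norm_num) hr1
  have hp2sq : p ^ 2 ≤ 9 := by nlinarith [sq_abs p]
  have hp1sq : (1:ℝ)/9 ≤ p ^ 2 := by nlinarith [sq_abs p, abs_nonneg p]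
  have hr2sq : r ^ 2 ≤ 9 := by nlinarith [sq_abs r]
  have hr1sq : (1:ℝ)/9 ≤ r ^ 2 := by nlinarith [sq_abs r, abs_nonneg r]
  have hrpos : (0:ℝ) < r ^ 2 := by linarith
  have hee : Real.exp (-(2*τ)) ≤ Real.exp (2*τ) :=
    Real.exp_le_exp.mpr (by linarith)
  set a₁ := Real.exp (-τ) / |p| with ha₁
  set a₂ := Real.exp τ / |p| with ha₂
  set L := Real.exp (-(2*τ)) / r ^ 2 - Real.exp (2*τ) * p ^ 2 with hLdef
  set U := Real.exp (2*τ) / r ^ 2 - Real.exp (-(2*τ)) * p ^ 2 with hUdef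
  have hLU : L ≤ U := by
    rw [hLdef, hUdef]
    gcongr
  set l := Real.sqrt L with hldef
  set u := Real.sqrt U with hudef
  have hexp2 : Real.exp (-(2*τ)) * Real.exp (2*τ) = 1 := by
    rw [← Real.exp_add]; norm_num
  have hsub : {x : ℝ × ℝ | 0 < x.1 ∧
          Real.exp (-(2 * τ)) ≤ p ^ 2 * x.1 ^ 2 ∧ p ^ 2 * x.1 ^ 2 ≤ Real.exp (2 * τ) ∧
          Real.exp (-(2 * τ)) ≤ r ^ 2 * (x.2 ^ 2 + (x.1⁻¹) ^ 2) ∧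
          r ^ 2 * (x.2 ^ 2 + (x.1⁻¹) ^ 2) ≤ Real.exp (2 * τ)}
      ⊆ (Icc a₁ a₂ ×ˢ Icc l u) ∪ (Icc a₁ a₂ ×ˢ Icc (-u) (-l)) := by
    rintro ⟨a, b⟩ ⟨ha, h2, h3, h4, h5⟩
    have heτ : Real.exp (-τ) * Real.exp (-τ) = Real.exp (-(2*τ)) := by
      rw [← Real.exp_add]; ring_nf
    have heτ' : Real.exp τ * Real.exp τ = Real.exp (2*τ) := by
      rw [← Real.exp_add]; ring_nf
    have haI : a ∈ Icc a₁ a₂ := by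
      constructor
      · show Real.exp (-τ) / |p| ≤ a
        rw [div_le_iff₀ hpa]
        apply my_le_of_sq_le_sq _ _ (Real.exp_pos _).le (mul_nonneg ha.le (abs_nonneg p))
        have hq : (a * |p|)^2 = p^2 * a^2 := by rw [mul_pow, sq_abs]; ring
        have hq2 : Real.exp (-τ) ^ 2 = Real.exp (-(2*τ)) := by rw [sq, heτ]
        rw [hq, hq2]; exact h2
      · show a ≤ Real.exp τ / |p|
        rw [le_div_iff₀ hpa]
        apply my_le_of_sq_le_sq _ _ (mul_nonneg ha.le (abs_nonneg p)) (Real.exp_pos _).le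
        have hq : (a * |p|)^2 = p^2 * a^2 := by rw [mul_pow, sq_abs]; ring
        have hq2 : Real.exp τ ^ 2 = Real.exp (2*τ) := by rw [sq, heτ']
        rw [hq, hq2]; exact h3
    have hainv_up : (a⁻¹) ^ 2 ≤ Real.exp (2*τ) * p ^ 2 := by
      have hmul := mul_le_mul_of_nonneg_right h2
        (by positivity : (0:ℝ) ≤ (a⁻¹)^2 * Real.exp (2*τ))
      have hid : p ^ 2 * a ^ 2 * ((a⁻¹)^2 * Real.exp (2*τ)) = Real.exp (2*τ) * p^2 := by
        field_simp
      have hid2 : Real.exp (-(2*τ)) * ((a⁻¹)^2 * Real.exp (2*τ)) = (a⁻¹)^2 := by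
        rw [show Real.exp (-(2*τ)) * ((a⁻¹)^2 * Real.exp (2*τ))
          = (Real.exp (-(2*τ)) * Real.exp (2*τ)) * (a⁻¹)^2 by ring, hexp2, one_mul]
      rw [hid, hid2] at hmul
      exact hmul
    have hainv_lo : Real.exp (-(2*τ)) * p ^ 2 ≤ (a⁻¹) ^ 2 := by
      have hmul := mul_le_mul_of_nonneg_right h3
        (by positivity : (0:ℝ) ≤ (a⁻¹)^2 * Real.exp (-(2*τ)))
      have hid : p ^ 2 * a ^ 2 * ((a⁻¹)^2 * Real.exp (-(2*τ))) = Real.exp (-(2*τ)) * p^2 := by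
        field_simp
      have hid2 : Real.exp (2*τ) * ((a⁻¹)^2 * Real.exp (-(2*τ))) = (a⁻¹)^2 := by
        rw [show Real.exp (2*τ) * ((a⁻¹)^2 * Real.exp (-(2*τ)))
          = (Real.exp (-(2*τ)) * Real.exp (2*τ)) * (a⁻¹)^2 by ring, hexp2, one_mul]
      rw [hid, hid2] at hmul
      exact hmul
    have hbL : L ≤ b ^ 2 := by
      show Real.exp (-(2*τ)) / r ^ 2 - Real.exp (2*τ) * p ^ 2 ≤ b ^ 2
      rw [sub_le_iff_le_add, div_le_iff₀ hrpos]
      calc Real.exp (-(2*τ)) ≤ r^2 * (b^2 + (a⁻¹)^2) := h4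
        _ ≤ r^2 * (b^2 + Real.exp (2*τ) * p^2) :=
            mul_le_mul_of_nonneg_left (by linarith) hrpos.le
        _ = (b^2 + Real.exp (2*τ) * p^2) * r^2 := mul_comm _ _
    have hbU : b ^ 2 ≤ U := by
      show b ^ 2 ≤ Real.exp (2*τ) / r ^ 2 - Real.exp (-(2*τ)) * p ^ 2
      rw [le_sub_iff_add_le, le_div_iff₀ hrpos]
      calc (b^2 + Real.exp (-(2*τ)) * p^2) * r^2 = r^2 * (b^2 + Real.exp (-(2*τ)) * p^2) :=
            mul_comm _ _
        _ ≤ r^2 * (b^2 + (a⁻¹)^2) := mul_le_mul_of_nonneg_left (by linarith) hrpos.le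
        _ ≤ Real.exp (2*τ) := h5
    have hlb : l ≤ |b| := by
      rw [hldef, ← Real.sqrt_sq_eq_abs]; exact Real.sqrt_le_sqrt hbL
    have hub : |b| ≤ u := by
      rw [hudef, ← Real.sqrt_sq_eq_abs]; exact Real.sqrt_le_sqrt hbU
    rcases le_or_gt 0 b with hb | hb
    · rw [abs_of_nonneg hb] at hlb hub
      exact Or.inl ⟨haI, hlb, hub⟩
    · rw [abs_of_neg hb] at hlb hub
      exact Or.inr ⟨haI, by linarith, by linarith⟩
  -- measure computation
  have hvol : volume ((Icc a₁ a₂ ×ˢ Icc l u) ∪ (Icc a₁ a₂ ×ˢ Icc (-u) (-l)))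
      ≤ ENNReal.ofReal (2 * ((a₂ - a₁) * (u - l))) := by
    have hul : l ≤ u := Real.sqrt_le_sqrt hLU
    have ha12 : a₁ ≤ a₂ := by
      rw [ha₁, ha₂]
      gcongr
      linarith
    calc volume ((Icc a₁ a₂ ×ˢ Icc l u) ∪ (Icc a₁ a₂ ×ˢ Icc (-u) (-l)))
        ≤ volume (Icc a₁ a₂ ×ˢ Icc l u) + volume (Icc a₁ a₂ ×ˢ Icc (-u) (-l)) :=
          measure_union_le _ _
      _ = ENNReal.ofReal (a₂ - a₁) * ENNReal.ofReal (u - l)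
          + ENNReal.ofReal (a₂ - a₁) * ENNReal.ofReal (-l - -u) := by
          rw [Measure.volume_eq_prod, Measure.prod_prod, Measure.prod_prod,
            Real.volume_Icc, Real.volume_Icc, Real.volume_Icc]
      _ = ENNReal.ofReal (2 * ((a₂ - a₁) * (u - l))) := by
          rw [show -l - -u = u - l by ring, ← ENNReal.ofReal_mul (by linarith),
            ← ENNReal.ofReal_add (by nlinarith) (by nlinarith)]
          congr 1; ring
  refine le_trans (le_trans (measure_mono hsub) hvol) (ENNReal.ofReal_le_ofReal ?_)
  -- final real inequality
  have hI : a₂ - a₁ ≤ 12 * τ := by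
    have h1 : Real.exp τ - Real.exp (-τ) ≤ 4 * τ := my_exp_sub τ hτ.le (by linarith)
    have h2 : a₂ - a₁ = (Real.exp τ - Real.exp (-τ)) / |p| := by
      rw [ha₁, ha₂]; ring
    rw [h2, div_le_iff₀ hpa]
    have hq := mul_le_mul_of_nonneg_left hp1 (by positivity : (0:ℝ) ≤ 12*τ)
    linarith
  have hULle : U - L ≤ 144 * τ := by
    have h1 : Real.exp (2*τ) - Real.exp (-(2*τ)) ≤ 8 * τ := by
      have := my_exp_sub (2*τ) (by linarith) (by linarith)
      linarith
    have h2 : U - L = (Real.exp (2*τ) - Real.exp (-(2*τ))) * (1 / r^2 + p^2) := by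
      rw [hLdef, hUdef]; field_simp; ring
    have h3 : 1 / r^2 + p^2 ≤ 18 := by
      have : 1 / r^2 ≤ 9 := by
        rw [div_le_iff₀ hrpos]; linarith
      linarith
    rw [h2]
    have hq := mul_le_mul h1 h3 (by positivity) (by linarith : (0:ℝ) ≤ 8*τ)
    linarith
  have hul2 : u - l ≤ 12 * Real.sqrt τ := by
    have h1 := my_sqrt_sub L U hLU
    have h2 : Real.sqrt (U - L) ≤ Real.sqrt (144 * τ) := Real.sqrt_le_sqrt hULle
    have h3 : Real.sqrt (144 * τ) = 12 * Real.sqrt τ := by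
      rw [show (144:ℝ) * τ = 12^2 * τ by norm_num, Real.sqrt_mul (by positivity),
        Real.sqrt_sq (by norm_num)]
    rw [hldef, hudef]
    linarith [h3 ▸ h2]
  have hrpow : τ ^ ((3:ℝ)/2) = τ * Real.sqrt τ := by
    rw [show (3:ℝ)/2 = 1 + 1/2 by norm_num, Real.rpow_add hτ, Real.rpow_one,
      ← Real.sqrt_eq_rpow]
  rw [hrpow]
  have hsq : (0:ℝ) ≤ Real.sqrt τ := Real.sqrt_nonneg τ
  have hIl : (0:ℝ) ≤ a₂ - a₁ := by
    rw [ha₁, ha₂]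
    have : Real.exp (-τ) ≤ Real.exp τ := Real.exp_le_exp.mpr (by linarith)
    apply sub_nonneg.mpr; gcongr
  have hull : (0:ℝ) ≤ u - l := sub_nonneg.mpr (Real.sqrt_le_sqrt hLU)
  have hq := mul_le_mul hI hul2 hull (by positivity : (0:ℝ) ≤ 12*τ)
  nlinarith [mul_nonneg hτ.le hsq]
end
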